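/- arXiv:2109.07987 — 2 statements merged into one kernel-verified Lean document; each statement's English description precedes it below -/
import Mathlib

section
/- Under the hypotheses of the perturbation bound (H, δH Hermitian, ψ(0) a unit vector, χ(Δt) = exp(-iΔt(H+δH))ψ(0) - exp(-iΔtH)ψ(0), ψ(t) = exp(-itH)ψ(0)), the squared error satisfies ⟨χ(Δt),χ(Δt)⟩ ≤ Δt · ∫₀^{Δt} ⟨ψ(t), δH² ψ(t)⟩ dt. -/
noncomputable section

open scoped BigOperators

/-- Operator norm of a matrix induced by the ℓ² norm on ℂ^d. -/
def l2opNorm {d : ℕ} (M : Matrix (Fin d) (Fin d) ℂ) : ℝ :=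
  ‖Matrix.toEuclideanCLM (𝕜 := ℂ) M‖

/-- Matrix exponential. -/
def mexp {d : ℕ} (M : Matrix (Fin d) (Fin d) ℂ) : Matrix (Fin d) (Fin d) ℂ :=
  NormedSpace.exp M

/-!
With `X = -i(H + δH)` and `Y = -iH`, Duhamel's formula
`e^{tX} - e^{tY} = ∫₀ᵗ e^{(t-s)X} (X - Y) e^{sY} ds` writes `χ(Δt)` as the integral of
`e^{(Δt-s)X}(-i δH) ψ(s)`. As `X` is skew-adjoint, `e^{(Δt-s)X}` is unitary, so
`‖χ(Δt)‖ ≤ ∫₀^Δt ‖δH ψ(s)‖ ds`; Cauchy–Schwarz on `[0, Δt]` and `‖δH ψ‖² = ⟨ψ, δH² ψ⟩`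
finish.
-/

open NormedSpace intervalIntegral

section Duhamel

variable {𝔸 : Type*} [NormedRing 𝔸] [NormedAlgebra ℝ 𝔸] [CompleteSpace 𝔸]

theorem continuous_exp_sub_smul_mul_mul_exp_smul (X Y Z : 𝔸) (t : ℝ) :
    Continuous fun s : ℝ => exp ((t - s) • X) * Z * exp (s • Y) :=
  (((differentiable_exp_smul_const ℝ X).continuous.comp (continuous_sub_left t)).mul
    continuous_const).mul (differentiable_exp_smul_const ℝ Y).continuous

theorem exp_smul_sub_exp_smul_eq_integral (X Y : 𝔸) (t : ℝ) :
    exp (t • X) - exp (t • Y) =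
      ∫ s in 0..t, exp ((t - s) • X) * (X - Y) * exp (s • Y) := by
  have hderiv : ∀ s : ℝ, HasDerivAt (fun s : ℝ => exp ((t - s) • X) * exp (s • Y))
      (-(exp ((t - s) • X) * (X - Y) * exp (s • Y))) s := by
    intro s
    have hX : HasDerivAt (fun s : ℝ => exp ((t - s) • X)) (-(exp ((t - s) • X) * X)) s := by
      simpa [Function.comp_def] using
        (hasDerivAt_exp_smul_const X (t - s)).scomp s ((hasDerivAt_id s).const_sub t)
    refine (hX.mul (hasDerivAt_exp_smul_const' Y s)).congr_deriv ?_
    noncomm_ring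
  rw [← neg_sub, ← neg_neg (∫ s in 0..t, _), ← integral_neg,
    integral_eq_sub_of_hasDerivAt (fun s _ => hderiv s)
      ((continuous_exp_sub_smul_mul_mul_exp_smul X Y (X - Y) t).neg.intervalIntegrable 0 t)]
  simp only [sub_self, sub_zero, zero_smul, exp_zero, one_mul, mul_one]

end Duhamel

theorem sq_intervalIntegral_le_mul_intervalIntegral_sq {f : ℝ → ℝ} {a b : ℝ} (hab : a ≤ b)
    (hf : IntervalIntegrable f MeasureTheory.volume a b)
    (hf2 : IntervalIntegrable (fun x => f x ^ 2) MeasureTheory.volume a b) :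
    (∫ x in a..b, f x) ^ 2 ≤ (b - a) * ∫ x in a..b, f x ^ 2 := by
  rcases hab.eq_or_lt with rfl | hlt
  · simp
  set J := ∫ x in a..b, f x
  set Q := ∫ x in a..b, f x ^ 2
  set L := b - a
  have hexpand : ∫ x in a..b, (L * f x - J) ^ 2 = L * (L * Q - J ^ 2) := by
    have hsq : ∀ x, (L * f x - J) ^ 2 = L ^ 2 * f x ^ 2 - 2 * L * J * f x + J ^ 2 := fun x => by
      ring
    simp_rw [hsq]
    rw [integral_add ((hf2.const_mul _).sub (hf.const_mul _)) intervalIntegrable_const,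
      integral_sub (hf2.const_mul _) (hf.const_mul _), integral_const_mul, integral_const_mul,
      integral_const, smul_eq_mul]
    ring
  have hnonneg : 0 ≤ L * (L * Q - J ^ 2) :=
    hexpand ▸ integral_nonneg hab fun x _ => sq_nonneg _
  nlinarith [nonneg_of_mul_nonneg_right hnonneg (sub_pos.2 hlt)]

section HilbertSpace

variable {E : Type*} [NormedAddCommGroup E] [InnerProductSpace ℂ E] [CompleteSpace E]

theorem norm_exp_apply_of_mem_skewAdjoint {X : E →L[ℂ] E}
    (hX : X ∈ skewAdjoint (E →L[ℂ] E)) (v : E) : ‖exp X v‖ = ‖v‖ := by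
  let _ : NormedAlgebra ℚ (E →L[ℂ] E) := .restrictScalars ℚ ℂ _
  have hU : exp X ∈ unitary (E →L[ℂ] E) := exp_mem_unitary_of_mem_skewAdjoint hX
  exact ContinuousLinearMap.norm_map_of_mem_unitary hU v

theorem norm_exp_smul_apply_sub_exp_smul_apply_le {X : E →L[ℂ] E}
    (hX : X ∈ skewAdjoint (E →L[ℂ] E)) (Y : E →L[ℂ] E) (v : E) {t : ℝ} (ht : 0 ≤ t) :
    ‖exp (t • X) v - exp (t • Y) v‖ ≤ ∫ s in 0..t, ‖(X - Y) (exp (s • Y) v)‖ := by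
  rw [← sub_apply, exp_smul_sub_exp_smul_eq_integral,
    ContinuousLinearMap.intervalIntegral_apply
      ((continuous_exp_sub_smul_mul_mul_exp_smul X Y (X - Y) t).intervalIntegrable 0 t)]
  refine (norm_integral_le_integral_norm ht).trans_eq (integral_congr fun s _ => ?_)
  simp only [mul_apply_eq_comp]
  exact norm_exp_apply_of_mem_skewAdjoint (skewAdjoint.smul_mem (t - s) hX) _

theorem norm_exp_smul_apply_sub_exp_smul_apply_sq_le {X : E →L[ℂ] E}
    (hX : X ∈ skewAdjoint (E →L[ℂ] E)) (Y : E →L[ℂ] E) (v : E) {t : ℝ} (ht : 0 ≤ t) :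
    ‖exp (t • X) v - exp (t • Y) v‖ ^ 2 ≤ t * ∫ s in 0..t, ‖(X - Y) (exp (s • Y) v)‖ ^ 2 := by
  have hcont : Continuous fun s : ℝ => ‖(X - Y) (exp (s • Y) v)‖ :=
    ((X - Y).continuous.comp
      ((differentiable_exp_smul_const ℝ Y).continuous.clm_apply continuous_const)).norm
  calc ‖exp (t • X) v - exp (t • Y) v‖ ^ 2
      ≤ (∫ s in 0..t, ‖(X - Y) (exp (s • Y) v)‖) ^ 2 := by
        gcongr
        exact norm_exp_smul_apply_sub_exp_smul_apply_le hX Y v ht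
    _ ≤ t * ∫ s in 0..t, ‖(X - Y) (exp (s • Y) v)‖ ^ 2 := by
        simpa using sq_intervalIntegral_le_mul_intervalIntegral_sq ht
          (hcont.intervalIntegrable 0 t) ((hcont.pow 2).intervalIntegrable 0 t)

end HilbertSpace

open scoped Matrix.Norms.L2Operator in
theorem toEuclideanCLM_mexp {d : ℕ} (M : Matrix (Fin d) (Fin d) ℂ) :
    Matrix.toEuclideanCLM (𝕜 := ℂ) (mexp M) = exp (Matrix.toEuclideanCLM (𝕜 := ℂ) M) := by
  let _ : NormedAlgebra ℚ (Matrix (Fin d) (Fin d) ℂ) := .restrictScalars ℚ ℂ _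
  exact map_exp (Matrix.toEuclideanCLM (𝕜 := ℂ) (n := Fin d))
    (LinearMap.continuous_of_finiteDimensional
      (Matrix.toEuclideanCLM (𝕜 := ℂ) (n := Fin d)).toAlgEquiv.toLinearMap) M

theorem toEuclideanCLM_mexp_neg_I_mul_smul {d : ℕ} (M : Matrix (Fin d) (Fin d) ℂ) (t : ℝ) :
    Matrix.toEuclideanCLM (𝕜 := ℂ) (mexp ((-Complex.I * t) • M)) =
      exp (t • (-Complex.I) • Matrix.toEuclideanCLM (𝕜 := ℂ) M) := by
  rw [toEuclideanCLM_mexp, map_smul, mul_comm, mul_smul]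
  congr 1

theorem norm_sq_toEuclideanCLM_apply_of_isHermitian {n : Type*} [Fintype n] [DecidableEq n]
    {M : Matrix n n ℂ} (hM : M.IsHermitian) (v : EuclideanSpace ℂ n) :
    ‖Matrix.toEuclideanCLM (𝕜 := ℂ) M v‖ ^ 2 =
      (inner (𝕜 := ℂ) v (WithLp.toLp 2 ((M ^ 2).mulVec v) : EuclideanSpace ℂ n)).re := by
  rw [ContinuousLinearMap.apply_norm_sq_eq_inner_adjoint_right,
    (hM.isSelfAdjoint.map Matrix.toEuclideanCLM).adjoint_eq, pow_two, ← Matrix.mulVec_mulVec]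
  rfl

theorem one_step_mean_square_error_bound_general {d : ℕ}
    (H δH : Matrix (Fin d) (Fin d) ℂ) (hH : H.IsHermitian) (hδH : δH.IsHermitian)
    (ψ0 : EuclideanSpace ℂ (Fin d))
    (ψ χ : ℝ → EuclideanSpace ℂ (Fin d))
    (hψ : ∀ t : ℝ, ψ t = (mexp ((-Complex.I * t) • H)).mulVec ψ0)
    (hχ : ∀ t : ℝ, χ t = (mexp ((-Complex.I * t) • (H + δH))).mulVec ψ0
                        - (mexp ((-Complex.I * t) • H)).mulVec ψ0)
    (Δt : ℝ) (hΔt : 0 ≤ Δt) :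
    (inner (𝕜 := ℂ) (χ Δt) (χ Δt)).re ≤
      Δt * ∫ t in (0 : ℝ)..Δt,
        (inner (𝕜 := ℂ) (ψ t) ((WithLp.toLp 2 ((δH ^ 2).mulVec (ψ t)) : EuclideanSpace ℂ (Fin d)))).re := by
  set toCLM := Matrix.toEuclideanCLM (𝕜 := ℂ) (n := Fin d)
  set Y := (-Complex.I) • toCLM H
  have hψ_exp : ∀ t : ℝ, ψ t = exp (t • Y) ψ0 := fun t => by
    ext1
    rw [hψ t, ← toEuclideanCLM_mexp_neg_I_mul_smul, Matrix.ofLp_toEuclideanCLM]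
  have hχ_exp : χ Δt = exp (Δt • (-Complex.I) • toCLM (H + δH)) ψ0 - exp (Δt • Y) ψ0 := by
    ext1
    rw [hχ Δt, WithLp.ofLp_sub, ← toEuclideanCLM_mexp_neg_I_mul_smul,
      ← toEuclideanCLM_mexp_neg_I_mul_smul, Matrix.ofLp_toEuclideanCLM, Matrix.ofLp_toEuclideanCLM]
  have hskew : (-Complex.I) • toCLM (H + δH) ∈ skewAdjoint _ :=
    ((hH.add hδH).isSelfAdjoint.map toCLM).smul_mem_skewAdjoint (by simp [skewAdjoint.mem_iff])
  calc (inner (𝕜 := ℂ) (χ Δt) (χ Δt)).re = ‖χ Δt‖ ^ 2 := inner_self_eq_norm_sq (𝕜 := ℂ) _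
    _ ≤ Δt * ∫ s in 0..Δt, ‖((-Complex.I) • toCLM (H + δH) - Y) (exp (s • Y) ψ0)‖ ^ 2 :=
        hχ_exp ▸ norm_exp_smul_apply_sub_exp_smul_apply_sq_le hskew Y ψ0 hΔt
    _ = _ := by
        congr 1
        refine integral_congr fun s _ => ?_
        rw [map_add, smul_add, add_sub_cancel_left, smul_apply, norm_smul, norm_neg,
          Complex.norm_I, one_mul, ← hψ_exp, norm_sq_toEuclideanCLM_apply_of_isHermitian hδH]

theorem one_step_mean_square_error_bound {d : ℕ}
    (H δH : Matrix (Fin d) (Fin d) ℂ) (hH : H.IsHermitian) (hδH : δH.IsHermitian)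
    (ψ0 : EuclideanSpace ℂ (Fin d)) (hψ0 : ‖ψ0‖ = 1)
    (ψ χ : ℝ → EuclideanSpace ℂ (Fin d))
    (hψ : ∀ t : ℝ, ψ t = (mexp ((-Complex.I * t) • H)).mulVec ψ0)
    (hχ : ∀ t : ℝ, χ t = (mexp ((-Complex.I * t) • (H + δH))).mulVec ψ0
                        - (mexp ((-Complex.I * t) • H)).mulVec ψ0)
    (Δt : ℝ) (hΔt : 0 ≤ Δt) :
    (inner (𝕜 := ℂ) (χ Δt) (χ Δt)).re ≤
      Δt * ∫ t in (0 : ℝ)..Δt,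
        (inner (𝕜 := ℂ) (ψ t) ((WithLp.toLp 2 ((δH ^ 2).mulVec (ψ t)) : EuclideanSpace ℂ (Fin d)))).re :=
  one_step_mean_square_error_bound_general H δH hH hδH ψ0 ψ χ hψ hχ Δt hΔt
end
end

section
/- Let H₁,…,H_K be Hermitian matrices in ℂ^{d×d}, ψ(0) a unit vector, and χ = exp(-iΔtH₁)···exp(-iΔtH_K)ψ(0) - exp(-iΔt(H₁+···+H_K))ψ(0). Then ‖χ‖ ≤ (Δt²/2) · Σ_{1 ≤ j < k ≤ K} ‖[H_j, H_k]‖. -/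
noncomputable section

open scoped BigOperators

/-
Skew-adjoint elements of a C⋆-algebra exponentiate to unitaries, so multiplying by `exp x` is an
isometry. For two factors, `g t = exp (t • a) * exp (t • b) * exp ((1 - t) • (a + b))` runs
from `exp (a + b)` to `exp a * exp b`, and its derivative
`exp (t • a) * ⁅a, exp (t • b)⁆ * exp ((1 - t) • (a + b))` has norm
`‖⁅a, exp (t • b)⁆‖ ≤ t * ‖⁅a, b⁆‖` (by the same interpolation once more); integrating gives
`‖⁅a, b⁆‖ / 2`. For `K` factors, peel off the first one:
`exp a₀ * Q - exp (a₀ + B) = exp a₀ * (Q - exp B) + (exp a₀ * exp B - exp (a₀ + B))` with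
`B = a₁ + ⋯ + a_{K-1}`, and `‖⁅a₀, B⁆‖ ≤ ∑ ‖⁅a₀, aⱼ⁆‖`. The theorem is the case `aⱼ = -iΔt • Hⱼ`.
-/

open NormedSpace Finset

theorem Fin.sum_filter_fst_lt_snd_succ {M : Type*} [AddCommMonoid M] {K : ℕ}
    (f : Fin (K + 1) → Fin (K + 1) → M) :
    ∑ p ∈ univ.filter (fun p : Fin (K + 1) × Fin (K + 1) => p.1 < p.2), f p.1 p.2 =
      ∑ j : Fin K, f 0 j.succ +
        ∑ p ∈ univ.filter (fun p : Fin K × Fin K => p.1 < p.2), f p.1.succ p.2.succ := by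
  simp only [sum_filter, Fintype.sum_prod_type]
  simp [Fin.sum_univ_succ, Fin.succ_pos]

lemma norm_lie_smul_smul {𝕜 A : Type*} [NormedField 𝕜] [NormedRing A] [NormedAlgebra 𝕜 A]
    (c : 𝕜) (x y : A) : ‖⁅c • x, c • y⁆‖ = ‖c‖ ^ 2 * ‖⁅x, y⁆‖ := by
  rw [Ring.lie_def, Ring.lie_def, smul_mul_smul_comm, smul_mul_smul_comm, ← smul_sub, norm_smul,
    norm_mul, sq]

lemma IsSelfAdjoint.neg_I_mul_ofReal_smul_mem_skewAdjoint {E : Type*} [AddCommGroup E]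
    [StarAddMonoid E] [Module ℂ E] [StarModule ℂ E] {x : E} (hx : IsSelfAdjoint x) (t : ℝ) :
    (-Complex.I * t) • x ∈ skewAdjoint E :=
  hx.smul_mem_skewAdjoint <| by simp [skewAdjoint.mem_iff, Complex.conj_ofReal]

section SkewAdjointExp

variable {A : Type*} [CStarAlgebra A]

lemma norm_exp_mul_of_mem_skewAdjoint {a : A} (ha : a ∈ skewAdjoint A) (x : A) :
    ‖exp a * x‖ = ‖x‖ :=
  let +nondep : NormedAlgebra ℚ A := .restrictScalars ℚ ℂ A
  CStarRing.norm_mem_unitary_mul x (exp_mem_unitary_of_mem_skewAdjoint ha)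

lemma norm_mul_exp_of_mem_skewAdjoint {a : A} (ha : a ∈ skewAdjoint A) (x : A) :
    ‖x * exp a‖ = ‖x‖ :=
  let +nondep : NormedAlgebra ℚ A := .restrictScalars ℚ ℂ A
  CStarRing.norm_mul_mem_unitary x (exp_mem_unitary_of_mem_skewAdjoint ha)

lemma hasDerivAt_exp_sub_smul (b : A) (t s : ℝ) :
    HasDerivAt (fun s : ℝ => exp ((t - s) • b)) (-(exp ((t - s) • b) * b)) s := by
  simpa [Function.comp_def] using
    (hasDerivAt_exp_smul_const b (t - s)).scomp s ((hasDerivAt_id s).const_sub t)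

lemma norm_lie_exp_smul_le (a : A) {b : A} (hb : b ∈ skewAdjoint A) {t : ℝ} (ht : 0 ≤ t) :
    ‖⁅a, exp (t • b)⁆‖ ≤ t * ‖⁅a, b⁆‖ := by
  have hderiv (s : ℝ) : HasDerivAt (fun s : ℝ => exp (s • b) * a * exp ((t - s) • b))
      (-(exp (s • b) * ⁅a, b⁆ * exp ((t - s) • b))) s := by
    refine (((hasDerivAt_exp_smul_const b s).mul_const a).mul
      (hasDerivAt_exp_sub_smul b t s)).congr_deriv ?_
    rw [Ring.lie_def, ← (((Commute.refl b).smul_right (t - s)).exp_right).eq]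
    noncomm_ring
  have hbound (s : ℝ) : ‖-(exp (s • b) * ⁅a, b⁆ * exp ((t - s) • b))‖ ≤ ‖⁅a, b⁆‖ := by
    rw [norm_neg, norm_mul_exp_of_mem_skewAdjoint (skewAdjoint.smul_mem (t - s) hb),
      norm_exp_mul_of_mem_skewAdjoint (skewAdjoint.smul_mem s hb)]
  have := norm_image_sub_le_of_norm_deriv_le_segment' (fun s _ => (hderiv s).hasDerivWithinAt)
    (fun s _ => hbound s) t (Set.right_mem_Icc.mpr ht)
  simpa [Ring.lie_def, norm_sub_rev, mul_comm] using this

lemma norm_exp_mul_exp_sub_exp_add_le {a b : A} (ha : a ∈ skewAdjoint A)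
    (hb : b ∈ skewAdjoint A) : ‖exp a * exp b - exp (a + b)‖ ≤ ‖⁅a, b⁆‖ / 2 := by
  have hderiv (t : ℝ) : HasDerivAt
      (fun t : ℝ => exp (t • a) * exp (t • b) * exp ((1 - t) • (a + b)) - exp (a + b))
      (exp (t • a) * ⁅a, exp (t • b)⁆ * exp ((1 - t) • (a + b))) t := by
    refine ((((hasDerivAt_exp_smul_const a t).mul (hasDerivAt_exp_smul_const b t)).mul
      (hasDerivAt_exp_sub_smul (a + b) 1 t)).sub_const _).congr_deriv ?_
    rw [Pi.mul_apply, Ring.lie_def, ← (((Commute.refl (a + b)).smul_right (1 - t)).exp_right).eq]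
    noncomm_ring
  have hbound (t : ℝ) (ht : 0 ≤ t) :
      ‖exp (t • a) * ⁅a, exp (t • b)⁆ * exp ((1 - t) • (a + b))‖ ≤ t * ‖⁅a, b⁆‖ := by
    rw [norm_mul_exp_of_mem_skewAdjoint (skewAdjoint.smul_mem (1 - t) (add_mem ha hb)),
      norm_exp_mul_of_mem_skewAdjoint (skewAdjoint.smul_mem t ha)]
    exact norm_lie_exp_smul_le a hb ht
  have := image_norm_le_of_norm_deriv_right_le_deriv_boundary (a := 0) (b := 1)
    (B := fun t => t ^ 2 / 2 * ‖⁅a, b⁆‖) (B' := fun t => t * ‖⁅a, b⁆‖)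
    (fun t _ => (hderiv t).continuousAt.continuousWithinAt)
    (fun t _ => (hderiv t).hasDerivWithinAt) (by simp)
    (fun t => by simpa using ((hasDerivAt_pow 2 t).div_const 2).mul_const ‖⁅a, b⁆‖)
    (fun t ht => hbound t ht.1) (Set.right_mem_Icc.mpr zero_le_one)
  simpa [div_eq_inv_mul] using this

theorem norm_list_prod_exp_sub_exp_sum_le : ∀ {K : ℕ} (a : Fin K → A),
    (∀ j, a j ∈ skewAdjoint A) →
    ‖(List.ofFn fun j => exp (a j)).prod - exp (∑ j, a j)‖ ≤
      (∑ p ∈ univ.filter (fun p : Fin K × Fin K => p.1 < p.2), ‖⁅a p.1, a p.2⁆‖) / 2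
  | 0, _, _ => by simp
  | K + 1, a, ha => by
    set Q := (List.ofFn fun j : Fin K => exp (a j.succ)).prod
    set B := ∑ j : Fin K, a j.succ
    have hB : B ∈ skewAdjoint A := sum_mem fun j _ => ha j.succ
    have ih : ‖Q - exp B‖ ≤ _ :=
      norm_list_prod_exp_sub_exp_sum_le (fun j => a j.succ) (fun j => ha j.succ)
    have hlie : ‖⁅a 0, B⁆‖ ≤ ∑ j : Fin K, ‖⁅a 0, a j.succ⁆‖ := by
      rw [show ⁅a 0, B⁆ = ∑ j : Fin K, ⁅a 0, a j.succ⁆ by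
        simp only [B, Ring.lie_def, mul_sum, sum_mul, sum_sub_distrib]]
      exact norm_sum_le _ _
    rw [List.ofFn_succ, List.prod_cons, Fin.sum_univ_succ,
      Fin.sum_filter_fst_lt_snd_succ fun i j => ‖⁅a i, a j⁆‖]
    calc ‖exp (a 0) * Q - exp (a 0 + B)‖
        = ‖exp (a 0) * (Q - exp B) + (exp (a 0) * exp B - exp (a 0 + B))‖ := by noncomm_ring
      _ ≤ ‖Q - exp B‖ + ‖⁅a 0, B⁆‖ / 2 := by
        grw [norm_add_le, norm_exp_mul_of_mem_skewAdjoint (ha 0),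
          norm_exp_mul_exp_sub_exp_add_le (ha 0) hB]
      _ ≤ _ := by linarith

end SkewAdjointExp

section Matrix

open scoped Matrix.Norms.L2Operator

variable {𝕜 m n : Type*} [RCLike 𝕜] [Fintype m] [Fintype n] [DecidableEq n]

lemma Matrix.norm_le_l2_opNorm_mul_of_ofLp_eq_mulVec {M : Matrix m n 𝕜}
    {x : EuclideanSpace 𝕜 n} {y : EuclideanSpace 𝕜 m} (hy : y.ofLp = M.mulVec x.ofLp) :
    ‖y‖ ≤ ‖M‖ * ‖x‖ := by
  have : y = (EuclideanSpace.equiv m 𝕜).symm (M.mulVec x) := WithLp.ofLp_injective 2 hy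
  exact this ▸ M.l2_opNorm_mulVec x

end Matrix

theorem multiple_trotter_splitting_error_bound_general {d K : ℕ}
    (H : Fin K → Matrix (Fin d) (Fin d) ℂ) (hherm : ∀ j, (H j).IsHermitian)
    (ψ0 : EuclideanSpace ℂ (Fin d)) (hψ0 : ‖ψ0‖ = 1)
    (Δt : ℝ)
    (χ : EuclideanSpace ℂ (Fin d))
    (hχ : χ = ((List.ofFn fun j : Fin K => mexp ((-Complex.I * Δt) • H j)).prod).mulVec ψ0
            - (mexp ((-Complex.I * Δt) • ∑ j, H j)).mulVec ψ0) :
    ‖χ‖ ≤ Δt ^ 2 / 2 *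
      ∑ p ∈ Finset.univ.filter (fun p : Fin K × Fin K => p.1 < p.2),
        l2opNorm (H p.1 * H p.2 - H p.2 * H p.1) := by
  open scoped Matrix.Norms.L2Operator in
  set a := fun j => (-Complex.I * Δt) • H j
  rw [← Matrix.sub_mulVec, smul_sum] at hχ
  have htrotter := norm_list_prod_exp_sub_exp_sum_le a
    fun j => (hherm j).isSelfAdjoint.neg_I_mul_ofReal_smul_mem_skewAdjoint Δt
  have hlie (i j : Fin K) : ‖⁅a i, a j⁆‖ = Δt ^ 2 * l2opNorm (H i * H j - H j * H i) := by
    rw [norm_lie_smul_smul, Ring.lie_def]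
    congr 1
    simp
  calc ‖χ‖ ≤ ‖(List.ofFn fun j => exp (a j)).prod - exp (∑ j, a j)‖ :=
        (Matrix.norm_le_l2_opNorm_mul_of_ofLp_eq_mulVec hχ).trans_eq (by rw [hψ0, mul_one]; rfl)
    _ ≤ _ := htrotter
    _ = _ := by simp only [hlie, ← mul_sum]; ring

theorem multiple_trotter_splitting_error_bound {d K : ℕ}
    (H : Fin K → Matrix (Fin d) (Fin d) ℂ) (hherm : ∀ j, (H j).IsHermitian)
    (ψ0 : EuclideanSpace ℂ (Fin d)) (hψ0 : ‖ψ0‖ = 1)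
    (Δt : ℝ) (hΔt : 0 ≤ Δt)
    (χ : EuclideanSpace ℂ (Fin d))
    (hχ : χ = ((List.ofFn fun j : Fin K => mexp ((-Complex.I * Δt) • H j)).prod).mulVec ψ0
            - (mexp ((-Complex.I * Δt) • ∑ j, H j)).mulVec ψ0) :
    ‖χ‖ ≤ Δt ^ 2 / 2 *
      ∑ p ∈ Finset.univ.filter (fun p : Fin K × Fin K => p.1 < p.2),
        l2opNorm (H p.1 * H p.2 - H p.2 * H p.1) :=
  multiple_trotter_splitting_error_bound_general H hherm ψ0 hψ0 Δt χ hχ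
end
end
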